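/- Let X be a Tychonoff (completely regular Hausdorff) space. The following are equivalent for the space C(X) equipped with the graph topology τ_Γ: (1) (C(X), τ_Γ) is second countable; (2) (C(X), τ_Γ) has a countable network; (3) (C(X), τ_Γ) is separable; (4) (C(X), τ_Γ) satisfies the countable chain condition (every pairwise disjoint family of nonempty open sets is countable); (5) X is compact and metrizable. -/

import Mathlib

open TopologicalSpace Set

/-- The graph of a continuous map, as a subset of `X × Y`. -/
def graphSet {X Y : Type*} [TopologicalSpace X] [TopologicalSpace Y] (f : C(X, Y)) :
    Set (X × Y) := {p | p.2 = f p.1}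

/-- The graph topology `τ_Γ` on `C(X, Y)`, generated by the sets
`F_G = {f | graph f ⊆ G}` for `G` open in `X × Y`. -/
def graphTopology (X Y : Type*) [TopologicalSpace X] [TopologicalSpace Y] :
    TopologicalSpace C(X, Y) :=
  generateFrom {S | ∃ G : Set (X × Y), IsOpen G ∧ S = {f : C(X, Y) | graphSet f ⊆ G}}

/-- A topological space has a countable network if there is a countable family `N`
of subsets such that every open set containing a point `z` contains some member of
`N` containing `z`. -/
def HasCountableNetwork (Z : Type*) [TopologicalSpace Z] : Prop :=
  ∃ N : Set (Set Z), N.Countable ∧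
    ∀ (z : Z) (U : Set Z), IsOpen U → z ∈ U → ∃ M ∈ N, z ∈ M ∧ M ⊆ U

/-- A topological space satisfies the countable chain condition if every pairwise
disjoint family of nonempty open sets is countable. -/
def CCC (Z : Type*) [TopologicalSpace Z] : Prop :=
  ∀ 𝒜 : Set (Set Z), (∀ A ∈ 𝒜, IsOpen A ∧ A.Nonempty) →
    𝒜.Pairwise (Disjoint · ·) → 𝒜.Countable

/-!
Uniform balls `{g | ∀ x, dist (g x) (f x) < ε}` are open in `τ_Γ`. Under the countable chain
condition this gives two things: every `f` is bounded (otherwise the balls of radius `1` around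
the multiples `c • f`, `c ∈ ℝ`, are uncountably many and pairwise disjoint), and maximal
`δ`-separated families are countable, so `C(X)` has a countable uniformly dense subset `D`.
Uniform limits of members of `D` are continuous for the topology induced by evaluation at `D`,
so complete regularity makes `x ↦ (g x)_{g ∈ D}` an embedding of `X` into `ℝ^D`, and `X` is
metrizable. A metrizable space that is not compact carries a sequence without cluster points;
its range is closed and discrete, and Tietze extends an unbounded function from it. Conversely,
for compact metric `X` a thickening argument around the compact graph shows that `τ_Γ` is the
topology of uniform convergence, which is second countable.
-/

open Filter Topology

section CountabilityConditions

variable {Z : Type*} [TopologicalSpace Z]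

lemma HasCountableNetwork.of_secondCountableTopology [SecondCountableTopology Z] :
    HasCountableNetwork Z := by
  obtain ⟨B, hBc, -, hB⟩ := exists_countable_basis Z
  exact ⟨B, hBc, fun _ _ hU hz => hB.exists_subset_of_mem_open hz hU⟩

lemma HasCountableNetwork.separableSpace (h : HasCountableNetwork Z) : SeparableSpace Z := by
  obtain ⟨N, hNc, hN⟩ := h
  have : Countable {M ∈ N | M.Nonempty} := (hNc.mono (sep_subset _ _)).to_subtype
  choose c hc using fun M : {M ∈ N | M.Nonempty} => M.2.2
  refine ⟨range c, countable_range c, dense_iff_inter_open.2 fun U hU ⟨z, hz⟩ => ?_⟩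
  obtain ⟨M, hMN, hzM, hMU⟩ := hN z U hU hz
  exact ⟨_, hMU (hc ⟨M, hMN, z, hzM⟩), mem_range_self _⟩

lemma CCC.of_separableSpace [SeparableSpace Z] : CCC Z := fun _ h𝒜 hd =>
  Set.PairwiseDisjoint.countable_of_isOpen (s := id) hd (fun A hA => (h𝒜 A hA).1)
    fun A hA => (h𝒜 A hA).2

lemma CCC.countable_of_pairwiseDisjoint (h : CCC Z) {ι : Type*} {s : ι → Set Z} {a : Set ι}
    (hd : a.PairwiseDisjoint s) (ho : ∀ i ∈ a, IsOpen (s i)) (hne : ∀ i ∈ a, (s i).Nonempty) :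
    a.Countable := by
  have hinj : InjOn s a := fun i hi j hj hij => by
    by_contra hij'
    have hdij : Disjoint (s i) (s j) := hd hi hj hij'
    exact (hne i hi).ne_empty (disjoint_self.1 (hij ▸ hdij))
  refine countable_of_injective_of_countable_image hinj (h _ ?_ ?_)
  · exact forall_mem_image.2 fun i hi => ⟨ho i hi, hne i hi⟩
  · exact (hinj.pairwiseDisjoint_image (f := id)).2 hd

end CountabilityConditions

section GraphTopology

variable {X Y : Type*} [TopologicalSpace X]

lemma isOpen_setOf_graphSet_subset [TopologicalSpace Y] {G : Set (X × Y)} (hG : IsOpen G) :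
    IsOpen[graphTopology X Y] {f | graphSet f ⊆ G} :=
  GenerateOpen.basic _ ⟨G, hG, rfl⟩

lemma graphSet_subset_iff [TopologicalSpace Y] {f : C(X, Y)} {G : Set (X × Y)} :
    graphSet f ⊆ G ↔ ∀ x, (x, f x) ∈ G :=
  ⟨fun h x => h rfl, fun h p (hp : p.2 = f p.1) => by rw [← Prod.mk.eta (p := p), hp]; exact h _⟩

variable [PseudoMetricSpace Y]

def uniformBall (f : C(X, Y)) (ε : ℝ) : Set C(X, Y) := {g | ∀ x, dist (g x) (f x) < ε}

lemma mem_uniformBall_self (f : C(X, Y)) {ε : ℝ} (hε : 0 < ε) : f ∈ uniformBall f ε :=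
  fun x => by rwa [dist_self]

lemma isOpen_uniformBall (f : C(X, Y)) (ε : ℝ) :
    IsOpen[graphTopology X Y] (uniformBall f ε) := by
  have hG : IsOpen {p : X × Y | dist p.2 (f p.1) < ε} :=
    isOpen_lt (continuous_snd.dist (f.continuous.comp continuous_fst)) continuous_const
  convert isOpen_setOf_graphSet_subset hG using 1
  ext g
  simp only [uniformBall, mem_ofPred_eq, graphSet_subset_iff]

lemma disjoint_uniformBall {f g : C(X, Y)} {ε : ℝ} (x : X) (h : 2 * ε ≤ dist (f x) (g x)) :
    Disjoint (uniformBall f ε) (uniformBall g ε) :=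
  disjoint_left.2 fun u hf hg => by
    linarith [dist_triangle_left (f x) (g x) (u x), hf x, hg x]

lemma bddAbove_range_of_ccc (h : @CCC C(X, ℝ) (graphTopology X ℝ)) (f : C(X, ℝ)) :
    BddAbove (range f) := by
  by_contra hf
  rw [not_bddAbove_iff] at hf
  have hd : (univ : Set ℝ).PairwiseDisjoint fun c => uniformBall (c • f) 1 := by
    intro c _ c' _ hcc'
    have hpos : 0 < |c - c'| := abs_pos.2 (sub_ne_zero.2 hcc')
    obtain ⟨_, ⟨x, rfl⟩, hx⟩ := hf (2 / |c - c'|)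
    refine disjoint_uniformBall x ?_
    have : 2 ≤ |c - c'| * |f x| := by
      rw [div_lt_iff₀ hpos] at hx
      nlinarith [le_abs_self (f x)]
    simpa [Real.dist_eq, ← sub_mul, abs_mul] using this
  exact not_countable_univ <| @CCC.countable_of_pairwiseDisjoint _ (graphTopology X ℝ) h _ _ _ hd
    (fun c _ => isOpen_uniformBall _ _) fun c _ => ⟨_, mem_uniformBall_self _ one_pos⟩

end GraphTopology

lemma exists_maximal_pairwise {α : Type*} (r : α → α → Prop) :
    ∃ S : Set α, Maximal (·.Pairwise r) S :=
  zorn_subset _ fun _ hc hchain => ⟨_, hchain.pairwise_sUnion.2 hc, fun _ => subset_sUnion_of_mem⟩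

lemma Maximal.exists_not_rel_of_notMem {α : Type*} {r : α → α → Prop} [Std.Symm r] {S : Set α}
    (hS : Maximal (·.Pairwise r) S) {a : α} (ha : a ∉ S) : ∃ b ∈ S, ¬ r a b := by
  by_contra! h
  exact ha <| hS.mem_of_prop_insert <|
    (pairwise_insert_of_symm_of_notMem ha).2 ⟨hS.prop, fun b hb => h b hb⟩

section UniformApproximation

variable {X Y : Type*} [TopologicalSpace X] [PseudoMetricSpace Y]

def UniformlyDense (D : Set C(X, Y)) : Prop :=
  ∀ f : C(X, Y), ∀ ε > 0, ∃ g ∈ D, f ∈ uniformBall g ε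

lemma exists_countable_uniform_net_of_ccc (h : @CCC C(X, Y) (graphTopology X Y)) {δ : ℝ}
    (hδ : 0 < δ) : ∃ S : Set C(X, Y), S.Countable ∧ ∀ f, ∃ g ∈ S, f ∈ uniformBall g δ := by
  let far : C(X, Y) → C(X, Y) → Prop := fun f g => ∃ x, δ ≤ dist (f x) (g x)
  have : Std.Symm far := ⟨fun f g ⟨x, hx⟩ => ⟨x, dist_comm (f x) (g x) ▸ hx⟩⟩
  obtain ⟨S, hS⟩ := exists_maximal_pairwise far
  refine ⟨S, ?_, fun f => ?_⟩
  · refine @CCC.countable_of_pairwiseDisjoint _ (graphTopology X Y) h _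
      (fun g => uniformBall g (δ / 2)) _ (fun f hf g hg hfg => ?_)
      (fun g _ => isOpen_uniformBall g _) fun g _ => ⟨g, mem_uniformBall_self g (half_pos hδ)⟩
    obtain ⟨x, hx⟩ := hS.prop hf hg hfg
    exact disjoint_uniformBall x (by linarith)
  · by_cases hf : f ∈ S
    · exact ⟨f, hf, mem_uniformBall_self f hδ⟩
    obtain ⟨g, hg, hfg⟩ := hS.exists_not_rel_of_notMem hf
    exact ⟨g, hg, fun x => not_le.1 fun hx => hfg ⟨x, hx⟩⟩

lemma exists_countable_uniformlyDense_of_ccc (h : @CCC C(X, Y) (graphTopology X Y)) :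
    ∃ D : Set C(X, Y), D.Countable ∧ UniformlyDense D := by
  choose S hSc hS using fun n : ℕ =>
    exists_countable_uniform_net_of_ccc h (Nat.one_div_pos_of_nat (n := n))
  refine ⟨⋃ n, S n, countable_iUnion hSc, fun f ε hε => ?_⟩
  obtain ⟨n, hn⟩ := exists_nat_one_div_lt hε
  obtain ⟨g, hg, hfg⟩ := hS n f
  exact ⟨g, mem_iUnion.2 ⟨n, hg⟩, fun x => (hfg x).trans hn⟩

lemma UniformlyDense.continuous {D : Set C(X, Y)} (hD : UniformlyDense D) (f : C(X, Y))
    {t : TopologicalSpace X} (hDt : ∀ g ∈ D, Continuous[t, _] g) :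
    Continuous[t, _] f := by
  refine @continuous_of_uniform_approx_of_continuous _ _ t _ _ fun u hu => ?_
  obtain ⟨ε, hε, hεu⟩ := Metric.mem_uniformity_dist.1 hu
  obtain ⟨g, hg, hfg⟩ := hD f ε hε
  exact ⟨g, hDt g hg, fun x => hεu (hfg x)⟩

lemma UniformlyDense.isInducing_eval [CompletelyRegularSpace X] {D : Set C(X, ℝ)}
    (hD : UniformlyDense D) : IsInducing fun x (g : D) => g.1 x := by
  refine ⟨le_antisymm (continuous_pi fun g => g.1.continuous).le_induced fun U hU => ?_⟩
  refine (@isOpen_iff_forall_mem_open _ (induced (fun x (g : D) => g.1 x) _) _).2 fun x hx => ?_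
  obtain ⟨f, hf, hfx, hfU⟩ := CompletelyRegularSpace.completely_regular_isOpen x U hU hx
  let F : C(X, ℝ) := ⟨fun y => f y, continuous_subtype_val.comp hf⟩
  have hF : Continuous[induced (fun x (g : D) => g.1 x) inferInstance, _] F :=
    hD.continuous F fun g hg =>
      @Continuous.comp _ _ _ (induced _ _) _ _ (fun x (g : D) => g.1 x) (fun p => p ⟨g, hg⟩)
        (continuous_apply _) continuous_induced_dom
  refine ⟨F ⁻¹' Iio 1, fun y hy => ?_, continuous_def.1 hF _ isOpen_Iio, ?_⟩
  · by_contra hyU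
    simp [F, hfU hyU] at hy
  · simp [F, hfx]

lemma metrizableSpace_of_countable_uniformlyDense [T35Space X] {D : Set C(X, ℝ)}
    (hDc : D.Countable) (hD : UniformlyDense D) : MetrizableSpace X :=
  have := hDc.to_subtype
  hD.isInducing_eval.isEmbedding.metrizableSpace

end UniformApproximation

section Pseudocompact

variable {X : Type*} [TopologicalSpace X]

lemma infinite_range_of_forall_not_mapClusterPt {u : ℕ → X}
    (hu : ∀ a, ¬ MapClusterPt a atTop u) : (range u).Infinite := fun hfin =>
  let ⟨a, _, ha⟩ := hfin.isCompact.exists_mapClusterPt (f := atTop) (by simp)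
  hu a ha

lemma isClosed_and_isDiscrete_range_of_forall_not_mapClusterPt [T1Space X] {u : ℕ → X}
    (hu : ∀ a, ¬ MapClusterPt a atTop u) : IsClosed (range u) ∧ IsDiscrete (range u) := by
  refine isClosed_and_discrete_iff.2 fun a => ?_
  obtain ⟨V, hV, hVu⟩ : ∃ V ∈ 𝓝 a, {n | u n ∈ V}.Finite := by
    simpa [mapClusterPt_iff_frequently, Nat.frequently_atTop_iff_infinite] using hu a
  have hFa : ((u '' {n | u n ∈ V}) \ {a})ᶜ ∈ 𝓝 a :=
    (hVu.image u).sdiff.isClosed.compl_mem_nhds fun h => h.2 rfl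
  refine disjoint_principal_right.2 <|
    mem_of_superset (inter_mem_nhdsWithin _ (inter_mem hV hFa)) ?_
  rintro _ ⟨hne, hV, hF⟩ ⟨n, rfl⟩
  exact hF ⟨⟨n, hV, rfl⟩, hne⟩

lemma exists_forall_not_mapClusterPt_of_not_compactSpace [PseudoMetrizableSpace X]
    (h : ¬ CompactSpace X) : ∃ u : ℕ → X, ∀ a, ¬ MapClusterPt a atTop u := by
  rw [compactSpace_iff_seqCompactSpace, seqCompactSpace_iff, IsSeqCompact] at h
  push Not at h
  obtain ⟨u, -, hu⟩ := h
  exact ⟨u, fun a ha => let ⟨φ, hφ, hlim⟩ := ha.tendsto_subseq; hu a trivial φ hφ hlim⟩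

lemma exists_not_bddAbove_of_isClosed_of_isDiscrete [NormalSpace X] {S : Set X}
    (hS : IsClosed S) (hd : IsDiscrete S) (hinf : S.Infinite) :
    ∃ f : C(X, ℝ), ¬ BddAbove (range f) := by
  have := hd.to_subtype
  let e : ℕ ↪ S := hinf.natEmbedding
  obtain ⟨f, hf⟩ := ContinuousMap.exists_restrict_eq hS
    ⟨Function.extend e (fun n => (n : ℝ)) 0, continuous_of_discreteTopology⟩
  refine ⟨f, not_bddAbove_iff.2 fun B => ?_⟩
  obtain ⟨n, hn⟩ := exists_nat_gt B
  refine ⟨_, mem_range_self (e n : X), ?_⟩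
  have : f (e n) = n := (DFunLike.congr_fun hf (e n)).trans (e.injective.extend_apply _ _ _)
  rwa [this]

lemma compactSpace_of_forall_bddAbove [MetrizableSpace X]
    (h : ∀ f : C(X, ℝ), BddAbove (range f)) : CompactSpace X := by
  by_contra hX
  obtain ⟨u, hu⟩ := exists_forall_not_mapClusterPt_of_not_compactSpace hX
  obtain ⟨hc, hd⟩ := isClosed_and_isDiscrete_range_of_forall_not_mapClusterPt hu
  obtain ⟨f, hf⟩ := exists_not_bddAbove_of_isClosed_of_isDiscrete hc hd
    (infinite_range_of_forall_not_mapClusterPt hu)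
  exact hf (h f)

end Pseudocompact

section CompactMetric

variable {X Y : Type*} [PseudoMetricSpace X] [CompactSpace X] [PseudoMetricSpace Y]

lemma graphTopology_eq_compactOpen : graphTopology X Y = ContinuousMap.compactOpen := by
  refine le_antisymm (fun U hU => ?_) (le_generateFrom_iff_subset_isOpen.2 ?_)
  · refine (@isOpen_iff_forall_mem_open _ (graphTopology X Y) _).2 fun f hf => ?_
    obtain ⟨ε, hε, hεU⟩ := Metric.isOpen_iff.1 hU f hf
    refine ⟨uniformBall f ε, fun g hg => hεU ?_, isOpen_uniformBall f ε, mem_uniformBall_self f hε⟩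
    exact (ContinuousMap.dist_lt_iff hε).2 hg
  · rintro _ ⟨G, hG, rfl⟩
    refine (Metric.isOpen_iff (α := C(X, Y))).2 fun f hf => ?_
    have hcpt : IsCompact (graphSet f) := by
      convert isCompact_range (continuous_id.prodMk f.continuous)
      ext ⟨x, y⟩
      simp [graphSet, eq_comm]
    obtain ⟨δ, hδ, hδG⟩ := hcpt.exists_thickening_subset_open hG hf
    refine ⟨δ, hδ, fun g hg => graphSet_subset_iff.2 fun x => hδG ?_⟩
    refine Metric.mem_thickening_iff.2 ⟨(x, f x), graphSet_subset_iff.1 subset_rfl x, ?_⟩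
    simpa [Prod.dist_eq] using (ContinuousMap.dist_lt_iff hδ).1 (Metric.mem_ball.1 hg) x

end CompactMetric

lemma secondCountableTopology_graphTopology {X : Type*} [TopologicalSpace X] [CompactSpace X]
    [MetrizableSpace X] : @SecondCountableTopology C(X, ℝ) (graphTopology X ℝ) := by
  let := metrizableSpaceMetric X
  rw [graphTopology_eq_compactOpen]
  infer_instance

/-- for a Tychonoff space `X`, the following are equivalent for
`(C(X), τ_Γ)`: second countable; countable network; separable; countable chain
condition; `X` compact and metrizable. -/
theorem tfae_graphTopology_secondCountable (X : Type*) [TopologicalSpace X]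
    [T35Space X] :
    List.TFAE
      [ @SecondCountableTopology C(X, ℝ) (graphTopology X ℝ),
        @HasCountableNetwork C(X, ℝ) (graphTopology X ℝ),
        @SeparableSpace C(X, ℝ) (graphTopology X ℝ),
        @CCC C(X, ℝ) (graphTopology X ℝ),
        (CompactSpace X ∧ MetrizableSpace X) ] := by
  tfae_have 1 → 2 := @HasCountableNetwork.of_secondCountableTopology _ (graphTopology X ℝ)
  tfae_have 2 → 3 := @HasCountableNetwork.separableSpace _ (graphTopology X ℝ)
  tfae_have 3 → 4 := @CCC.of_separableSpace _ (graphTopology X ℝ)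
  tfae_have 4 → 5 := fun h => by
    obtain ⟨D, hDc, hD⟩ := exists_countable_uniformlyDense_of_ccc h
    have := metrizableSpace_of_countable_uniformlyDense hDc hD
    exact ⟨compactSpace_of_forall_bddAbove (bddAbove_range_of_ccc h), this⟩
  tfae_have 5 → 1 := fun ⟨_, _⟩ => secondCountableTopology_graphTopology
  tfae_finish
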